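/- Let μ be a product distribution on {0,1}^n, let f : {0,1}^n → {−1,+1}, and let T° be a bare tree with j leaves such that for every leaf l of T° the subfunction f_l is computable by a decision tree of depth at most D_opt and average depth at most Δ_opt (under the conditional product distribution at l). Then the leaf l* of maximum Score satisfies Score(l*) ≥ cost(T°)/(j·D_opt·Δ_opt). -/

import Mathlib

open Classical

/-- Binary decision trees over inputs in `Fin n → Bool`, with leaf labels in `L`.
A *bare tree* is a `DTree n Unit`; a labeled decision tree is a `DTree n Bool`
(`true` encoding `+1` and `false` encoding `-1`). -/
inductive DTree (n : ℕ) (L : Type) : Type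
  | leaf (label : L) : DTree n L
  | node (i : Fin n) (t0 t1 : DTree n L) : DTree n L

namespace DTree

variable {n : ℕ} {L : Type}

/-- The sequence of branching directions taken by the input `x` (root-to-leaf path). -/
def follow : DTree n L → (Fin n → Bool) → List Bool
  | .leaf _, _ => []
  | .node i t0 t1, x => x i :: (if x i then follow t1 x else follow t0 x)

/-- Addresses (root-to-leaf direction sequences) of all leaves of the tree. -/
def leafAddrs : DTree n L → List (List Bool)
  | .leaf _ => [[]]
  | .node _ t0 t1 =>
      (leafAddrs t0).map (fun s => false :: s) ++ (leafAddrs t1).map (fun s => true :: s)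

/-- Addresses of all internal nodes, together with the coordinate queried there. -/
def internals : DTree n L → List (List Bool × Fin n)
  | .leaf _ => []
  | .node i t0 t1 =>
      ([], i) :: ((internals t0).map (fun vj => (false :: vj.1, vj.2)) ++
        (internals t1).map (fun vj => (true :: vj.1, vj.2)))

/-- Addresses of all nodes (internal nodes and leaves). -/
def allAddrs : DTree n L → List (List Bool)
  | .leaf _ => [[]]
  | .node _ t0 t1 =>
      [] :: ((allAddrs t0).map (fun s => false :: s) ++ (allAddrs t1).map (fun s => true :: s))

/-- The coordinates queried along the path with direction sequence `s`. -/
def pathCoords : DTree n L → List Bool → List (Fin n)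
  | .leaf _, _ => []
  | .node _ _ _, [] => []
  | .node i t0 t1, b :: bs => i :: (if b then pathCoords t1 bs else pathCoords t0 bs)

/-- The substitution that fixes each coordinate queried along the path `s`
to the corresponding direction value. -/
def pathSubst : DTree n L → List Bool → (Fin n → Bool) → (Fin n → Bool)
  | .leaf _, _, x => x
  | .node _ _ _, [], x => x
  | .node i t0 t1, b :: bs, x =>
      if b then pathSubst t1 bs (Function.update x i true)
      else pathSubst t0 bs (Function.update x i false)

/-- Depth: maximum leaf depth. -/
def depth : DTree n L → ℕ
  | .leaf _ => 0
  | .node _ t0 t1 => max (depth t0) (depth t1) + 1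

/-- Evaluation of a labeled tree: the label of the leaf reached by `x`. -/
def eval : DTree n L → (Fin n → Bool) → L
  | .leaf b, _ => b
  | .node i t0 t1, x => if x i then eval t1 x else eval t0 x

/-- Replace the leaf at address `s` by an internal node querying coordinate `i`
(whose two children are leaves). -/
def splitAt : DTree n L → List Bool → Fin n → DTree n L
  | .leaf l, [], i => .node i (.leaf l) (.leaf l)
  | .leaf l, _ :: _, _ => .leaf l
  | .node j t0 t1, [], _ => .node j t0 t1
  | .node j t0 t1, b :: bs, i =>
      if b then .node j t0 (splitAt t1 bs i) else .node j (splitAt t0 bs i) t1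

/-- No coordinate is queried more than once on any root-to-leaf path. -/
def noRepeat : DTree n L → Prop
  | .leaf _ => True
  | .node i t0 t1 =>
      i ∉ (internals t0).map Prod.snd ∧ i ∉ (internals t1).map Prod.snd ∧
        noRepeat t0 ∧ noRepeat t1

end DTree

/-- The probability mass of the point `x` under the product distribution on
`Fin n → Bool` in which coordinate `i` equals `true` with probability `p i`. -/
noncomputable def prMass {n : ℕ} (p : Fin n → ℝ) (x : Fin n → Bool) : ℝ :=
  ∏ i, if x i then p i else 1 - p i

open Classical in
/-- The probability of the event `E` under the product distribution with biases `p`. -/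
noncomputable def prEvent {n : ℕ} (p : Fin n → ℝ) (E : (Fin n → Bool) → Prop) : ℝ :=
  ∑ x : Fin n → Bool, if E x then prMass p x else 0

/-- The influence of coordinate `i` on `f` under the product distribution with biases `p`:
`Pr[f x ≠ f x⁽ⁱ⁾]` where `x⁽ⁱ⁾` re-randomizes the `i`-th coordinate of `x`. -/
noncomputable def infl {n : ℕ} (p : Fin n → ℝ) (i : Fin n) (f : (Fin n → Bool) → Bool) : ℝ :=
  ∑ x : Fin n → Bool, prMass p x *
    ((if f x ≠ f (Function.update x i true) then p i else 0) +
     (if f x ≠ f (Function.update x i false) then 1 - p i else 0))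

/-- Total influence: the sum of the coordinate influences. -/
noncomputable def totalInf {n : ℕ} (p : Fin n → ℝ) (f : (Fin n → Bool) → Bool) : ℝ :=
  ∑ i, infl p i f

/-- Maximum coordinate influence. -/
noncomputable def maxInf {n : ℕ} (p : Fin n → ℝ) (f : (Fin n → Bool) → Bool) : ℝ :=
  ⨆ i : Fin n, infl p i f

/-- Expectation of the `±1` value of `f` (with `true ↦ 1`, `false ↦ -1`). -/
noncomputable def expVal {n : ℕ} (p : Fin n → ℝ) (f : (Fin n → Bool) → Bool) : ℝ :=
  ∑ x : Fin n → Bool, prMass p x * (if f x then 1 else -1)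

/-- Variance of the `±1`-valued function `f`: `1 - E[f]²`. -/
noncomputable def varOf {n : ℕ} (p : Fin n → ℝ) (f : (Fin n → Bool) → Bool) : ℝ :=
  1 - (expVal p f) ^ 2

/-- `error(f, ±1)`: the minority-value probability of `f`. -/
noncomputable def errOf {n : ℕ} (p : Fin n → ℝ) (f : (Fin n → Bool) → Bool) : ℝ :=
  min (prEvent p (fun x => f x = false)) (prEvent p (fun x => f x = true))

/-- `p_v` for a leaf `v` with address `s`: the probability that a random input reaches it. -/
noncomputable def reachLeaf {n : ℕ} {L : Type} (p : Fin n → ℝ) (T : DTree n L)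
    (s : List Bool) : ℝ :=
  prEvent p (fun x => T.follow x = s)

/-- `p_v` for an arbitrary node `v` with address `s`. -/
noncomputable def reachNode {n : ℕ} {L : Type} (p : Fin n → ℝ) (T : DTree n L)
    (s : List Bool) : ℝ :=
  prEvent p (fun x => s <+: T.follow x)

/-- The subfunction `f_v` at the node of `T` with address `s`: `f` with the
coordinates queried on the path to `v` fixed to their path values. -/
def subFun {n : ℕ} {L : Type} (f : (Fin n → Bool) → Bool) (T : DTree n L)
    (s : List Bool) : (Fin n → Bool) → Bool :=
  fun x => f (T.pathSubst s x)

/-- Average depth `Δ(T) = Σ_{leaves v} p_v · depth(v)`. -/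
noncomputable def avgDepth {n : ℕ} {L : Type} (p : Fin n → ℝ) (T : DTree n L) : ℝ :=
  ((T.leafAddrs).map (fun s => reachLeaf p T s * (s.length : ℝ))).sum

/-- `Score(v) = p_v · max_i Inf_i(f_v)` for a leaf `v` with address `s`. -/
noncomputable def score {n : ℕ} {L : Type} (p : Fin n → ℝ) (f : (Fin n → Bool) → Bool)
    (T : DTree n L) (s : List Bool) : ℝ :=
  reachLeaf p T s * maxInf p (subFun f T s)

/-- `cost(T°) = Σ_{leaves v} p_v · Inf(f_v)`. -/
noncomputable def cost {n : ℕ} {L : Type} (p : Fin n → ℝ) (f : (Fin n → Bool) → Bool)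
    (T : DTree n L) : ℝ :=
  ((T.leafAddrs).map (fun s => reachLeaf p T s * totalInf p (subFun f T s))).sum

/-- The error of the `f`-completion of a bare tree:
`error(T°, f) = Σ_{leaves v} p_v · error(f_v, ±1)`. -/
noncomputable def errTree {n : ℕ} {L : Type} (p : Fin n → ℝ) (f : (Fin n → Bool) → Bool)
    (T : DTree n L) : ℝ :=
  ((T.leafAddrs).map (fun s => reachLeaf p T s * errOf p (subFun f T s))).sum

/-!
For a leaf subfunction `g` computed by a decision tree of depth `D` and average depth `Δ`, two
classical inequalities give `Inf(g) ≤ D · Δ · maxᵢ Infᵢ(g)`: the reverse Poincaré inequality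
`2 Inf(g) ≤ D · Var(g)` and the OSSS inequality `Var(g) ≤ 2 Δ · maxᵢ Infᵢ(g)`. Both follow by
induction on the tree, splitting on the root coordinate `j` and restricting the two subtrees to
`x_j = b`. The one-coordinate facts behind the induction are that `2 Inf_j(g)` is the expected
conditional variance of `g` in `x_j` (hence at most `Var(g)`), and the law of total variance.
Weighting by `p_v` and summing over the leaves bounds `cost(T°)` by
`#leaves · D · Δ · Score(l*)`.
-/

open Finset Function

noncomputable def prExpect {n : ℕ} (p : Fin n → ℝ) (F : (Fin n → Bool) → ℝ) : ℝ :=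
  ∑ x, prMass p x * F x

def fixCoord {n : ℕ} {α : Type*} (g : (Fin n → Bool) → α) (j : Fin n) (b : Bool) :
    (Fin n → Bool) → α :=
  fun x => g (update x j b)

/-- The conditional expectation of `F` given all coordinates but `j`. -/
noncomputable def condAt {n : ℕ} (p : Fin n → ℝ) (j : Fin n) (F : (Fin n → Bool) → ℝ) :
    (Fin n → Bool) → ℝ :=
  fun x => p j * fixCoord F j true x + (1 - p j) * fixCoord F j false x

def toSign (b : Bool) : ℝ := if b then 1 else -1

section Expectation

variable {n : ℕ} {p : Fin n → ℝ}

lemma prMass_nonneg (hp : ∀ i, 0 ≤ p i ∧ p i ≤ 1) (x : Fin n → Bool) : 0 ≤ prMass p x :=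
  prod_nonneg fun i _ => by split_ifs <;> linarith [hp i]

lemma sum_prMass : ∑ x, prMass p x = 1 := by
  calc ∑ x, prMass p x = ∏ i, ∑ b : Bool, (if b then p i else 1 - p i) := by
        rw [prod_univ_sum, Fintype.piFinset_univ]; rfl
    _ = 1 := by simp

lemma prExpect_const (c : ℝ) : prExpect p (fun _ => c) = c := by
  simp [prExpect, ← sum_mul, sum_prMass]

lemma prExpect_add (F G : (Fin n → Bool) → ℝ) :
    prExpect p (fun x => F x + G x) = prExpect p F + prExpect p G := by
  simp [prExpect, mul_add, sum_add_distrib]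

lemma prExpect_sub (F G : (Fin n → Bool) → ℝ) :
    prExpect p (fun x => F x - G x) = prExpect p F - prExpect p G := by
  simp [prExpect, mul_sub, sum_sub_distrib]

lemma prExpect_const_mul (c : ℝ) (F : (Fin n → Bool) → ℝ) :
    prExpect p (fun x => c * F x) = c * prExpect p F := by
  simp [prExpect, mul_sum, mul_left_comm]

lemma prExpect_mono (hp : ∀ i, 0 ≤ p i ∧ p i ≤ 1) {F G : (Fin n → Bool) → ℝ}
    (hFG : ∀ x, F x ≤ G x) : prExpect p F ≤ prExpect p G :=
  sum_le_sum fun x _ => mul_le_mul_of_nonneg_left (hFG x) (prMass_nonneg hp x)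

lemma prExpect_nonneg (hp : ∀ i, 0 ≤ p i ∧ p i ≤ 1) {F : (Fin n → Bool) → ℝ}
    (hF : ∀ x, 0 ≤ F x) : 0 ≤ prExpect p F := by
  simpa [prExpect_const] using prExpect_mono hp (F := fun _ => 0) hF

lemma sq_prExpect_le (hp : ∀ i, 0 ≤ p i ∧ p i ≤ 1) (F : (Fin n → Bool) → ℝ) :
    prExpect p F ^ 2 ≤ prExpect p (fun x => F x ^ 2) :=
  Real.pow_arith_mean_le_arith_mean_pow_of_even _ _ _ (fun x _ => prMass_nonneg hp x)
    sum_prMass even_two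

theorem prExpect_condAt (j : Fin n) (F : (Fin n → Bool) → ℝ) :
    prExpect p (condAt p j F) = prExpect p F := by
  -- Write `x` as `(x j, x restricted to the other coordinates)`: the mass factors accordingly.
  set e := (Equiv.funSplitAt j Bool).symm
  have hmass : ∀ b y, prMass p (e (b, y)) =
      (if b then p j else 1 - p j) * ∏ i : {i // i ≠ j}, if y i then p i else 1 - p i := by
    intro b y
    rw [prMass, Fintype.prod_eq_mul_prod_subtype_ne _ j]
    congr 1
    · simp [e]
    · exact prod_congr rfl fun i _ => by simp [e, i.2]
  have hfix : ∀ b c y, fixCoord F j c (e (b, y)) = F (e (c, y)) := by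
    intro b c y
    simp only [fixCoord]
    congr 1
    funext i
    by_cases hi : i = j
    · subst hi; simp [e]
    · simp [e, hi]
  simp only [prExpect, ← e.sum_comp, Fintype.sum_prod_type, Fintype.sum_bool, hmass, condAt, hfix]
  simp only [if_true, Bool.false_eq_true, if_false, ← sum_add_distrib]
  exact sum_congr rfl fun y _ => by ring

lemma prExpect_split (j : Fin n) (F : (Fin n → Bool) → ℝ) :
    prExpect p F =
      p j * prExpect p (fixCoord F j true) + (1 - p j) * prExpect p (fixCoord F j false) := by
  rw [← prExpect_condAt j F]
  unfold condAt
  rw [prExpect_add, prExpect_const_mul, prExpect_const_mul]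

end Expectation

section Influence

variable {n : ℕ} {p : Fin n → ℝ}

lemma toSign_sq (b : Bool) : toSign b ^ 2 = 1 := by
  cases b <;> norm_num [toSign]

lemma toSign_cross_le {q : ℝ} (hq₀ : 0 ≤ q) (hq₁ : q ≤ 1) (a b c d : Bool) :
    q * (1 - q) * (toSign a - toSign b) * (toSign c - toSign d) ≤
      1 - (q * toSign a + (1 - q) * toSign b) ^ 2 := by
  have := mul_nonneg hq₀ (sub_nonneg.2 hq₁)
  cases a <;> cases b <;> cases c <;> cases d <;>
    simp only [toSign, if_true, Bool.false_eq_true, if_false] <;> nlinarith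

lemma expVal_eq_prExpect (g : (Fin n → Bool) → Bool) :
    expVal p g = prExpect p (fun x => toSign (g x)) := rfl

lemma infl_nonneg (hp : ∀ i, 0 ≤ p i ∧ p i ≤ 1) (i : Fin n)
    (g : (Fin n → Bool) → Bool) :
    0 ≤ infl p i g :=
  sum_nonneg fun x _ => mul_nonneg (prMass_nonneg hp x) (by split_ifs <;> linarith [hp i])

lemma infl_fixCoord_self (j : Fin n) (g : (Fin n → Bool) → Bool) (b : Bool) :
    infl p j (fixCoord g j b) = 0 := by
  simp [infl, fixCoord]

/-- `2 Inf_i g` is the expected conditional variance of `g` in the coordinate `i`. -/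
theorem two_mul_infl (i : Fin n) (g : (Fin n → Bool) → Bool) :
    2 * infl p i g = prExpect p (fun x => 1 - condAt p i (fun y => toSign (g y)) x ^ 2) := by
  change 2 * prExpect p _ = _
  rw [← prExpect_condAt i, ← prExpect_const_mul]
  congr 1
  funext x
  simp only [condAt, fixCoord, update_idem]
  cases g (update x i true) <;> cases g (update x i false) <;>
    simp only [toSign, ne_eq, not_true_eq_false, not_false_eq_true, Bool.false_eq_true,
      Bool.true_eq_false, if_true, if_false] <;> ring

lemma infl_eq_of_ne {i j : Fin n} (hij : i ≠ j) (g : (Fin n → Bool) → Bool) :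
    infl p i g =
      p j * infl p i (fixCoord g j true) + (1 - p j) * infl p i (fixCoord g j false) := by
  change prExpect p _ = p j * prExpect p _ + (1 - p j) * prExpect p _
  rw [prExpect_split j]
  unfold fixCoord
  simp only [update_comm hij.symm]

theorem totalInf_split (j : Fin n) (g : (Fin n → Bool) → Bool) :
    totalInf p g = infl p j g +
      (p j * totalInf p (fixCoord g j true) + (1 - p j) * totalInf p (fixCoord g j false)) := by
  have hsplit : ∀ i, infl p i g = (if i = j then infl p j g else 0) +
      (p j * infl p i (fixCoord g j true) + (1 - p j) * infl p i (fixCoord g j false)) := by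
    intro i
    by_cases hij : i = j
    · subst hij
      simp only [if_true, infl_fixCoord_self]
      ring
    · rw [if_neg hij, zero_add, infl_eq_of_ne hij]
  rw [totalInf, sum_congr rfl fun i _ => hsplit i]
  simp only [sum_add_distrib, sum_ite_eq', mem_univ, if_true, ← mul_sum, totalInf]

lemma expVal_split (j : Fin n) (g : (Fin n → Bool) → Bool) :
    expVal p g =
      p j * expVal p (fixCoord g j true) + (1 - p j) * expVal p (fixCoord g j false) :=
  prExpect_split j _

lemma varOf_eq (g : (Fin n → Bool) → Bool) :
    varOf p g = 1 - prExpect p (fun x => toSign (g x)) ^ 2 := rfl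

lemma varOf_nonneg (hp : ∀ i, 0 ≤ p i ∧ p i ≤ 1) (g : (Fin n → Bool) → Bool) :
    0 ≤ varOf p g := by
  have := sq_prExpect_le hp (fun x => toSign (g x))
  simp only [toSign_sq, prExpect_const] at this
  linarith [varOf_eq (p := p) g]

theorem two_mul_infl_le_varOf (hp : ∀ i, 0 ≤ p i ∧ p i ≤ 1) (i : Fin n)
    (g : (Fin n → Bool) → Bool) : 2 * infl p i g ≤ varOf p g := by
  rw [two_mul_infl, prExpect_sub, prExpect_const, varOf_eq,
    ← prExpect_condAt i (fun x => toSign (g x))]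
  linarith [sq_prExpect_le hp (condAt p i fun y => toSign (g y))]

theorem varOf_split_le (hp : ∀ i, 0 ≤ p i ∧ p i ≤ 1) (j : Fin n)
    (g : (Fin n → Bool) → Bool) :
    p j * varOf p (fixCoord g j true) + (1 - p j) * varOf p (fixCoord g j false) ≤
      varOf p g := by
  have hgap : varOf p g - (p j * varOf p (fixCoord g j true) +
      (1 - p j) * varOf p (fixCoord g j false)) =
      p j * (1 - p j) * (expVal p (fixCoord g j true) - expVal p (fixCoord g j false)) ^ 2 := by
    rw [varOf, varOf, varOf, expVal_split j g]
    ring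
  have := mul_nonneg (mul_nonneg (hp j).1 (sub_nonneg.2 (hp j).2)) (sq_nonneg
    (expVal p (fixCoord g j true) - expVal p (fixCoord g j false)))
  linarith

end Influence

noncomputable def cov {n : ℕ} (p : Fin n → ℝ) (g h : (Fin n → Bool) → Bool) : ℝ :=
  prExpect p (fun x => toSign (g x) * toSign (h x)) - expVal p g * expVal p h

section Covariance

variable {n : ℕ} {p : Fin n → ℝ}

lemma cov_self (g : (Fin n → Bool) → Bool) : cov p g g = varOf p g := by
  simp only [cov, ← sq, toSign_sq, prExpect_const, varOf]

lemma cov_const (g : (Fin n → Bool) → Bool) (c : Bool) : cov p g (fun _ => c) = 0 := by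
  simp only [cov, prExpect_const_mul, mul_comm _ (toSign c), expVal_eq_prExpect, prExpect_const]
  ring

/-- Splitting `h` on `x_j` changes the covariance by `p_j (1 - p_j) E[(g₁ - g₀)(h₁ - h₀)]`
(in `±1` values, `g_b` fixing `x_j = b`), which is at most `2 Inf_j g`. -/
theorem cov_le_split (hp : ∀ i, 0 ≤ p i ∧ p i ≤ 1) (j : Fin n)
    (g h : (Fin n → Bool) → Bool) :
    cov p g h ≤ p j * cov p g (fixCoord h j true) + (1 - p j) * cov p g (fixCoord h j false) +
      2 * infl p j g := by
  have hcross : prExpect p (fun x => toSign (g x) * toSign (h x)) -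
      p j * prExpect p (fun x => toSign (g x) * toSign (fixCoord h j true x)) -
      (1 - p j) * prExpect p (fun x => toSign (g x) * toSign (fixCoord h j false x)) ≤
      2 * infl p j g := by
    rw [two_mul_infl, ← prExpect_condAt j (fun x => toSign (g x) * toSign (h x)),
      ← prExpect_condAt j (fun x => toSign (g x) * toSign (fixCoord h j true x)),
      ← prExpect_condAt j (fun x => toSign (g x) * toSign (fixCoord h j false x)),
      ← prExpect_const_mul, ← prExpect_const_mul, ← prExpect_sub, ← prExpect_sub]
    refine prExpect_mono hp fun x => ?_
    simp only [condAt, fixCoord, update_idem]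
    calc _ = p j * (1 - p j) * (toSign (g (update x j true)) - toSign (g (update x j false))) *
            (toSign (h (update x j true)) - toSign (h (update x j false))) := by ring
      _ ≤ _ := toSign_cross_le (hp j).1 (hp j).2 _ _ _ _
  have hexp := expVal_split (p := p) j h
  simp only [cov, hexp]
  linarith

end Covariance

namespace DTree

variable {n : ℕ} {L : Type}

def restrict : DTree n L → Fin n → Bool → DTree n L
  | .leaf l, _, _ => .leaf l
  | .node k t0 t1, j, b =>
      if k = j then (if b then restrict t1 j b else restrict t0 j b)
      else .node k (restrict t0 j b) (restrict t1 j b)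

lemma eval_restrict (T : DTree n L) (j : Fin n) (b : Bool) :
    (T.restrict j b).eval = fixCoord T.eval j b := by
  funext x
  induction T with
  | leaf l => rfl
  | node k t0 t1 ih0 ih1 =>
    by_cases hkj : k = j
    · subst hkj
      cases b <;> simp [restrict, eval, fixCoord, ih0, ih1]
    · simp only [restrict, if_neg hkj, eval, fixCoord, update_of_ne hkj, ih0, ih1]

lemma depth_restrict_le (T : DTree n L) (j : Fin n) (b : Bool) :
    (T.restrict j b).depth ≤ T.depth := by
  induction T with
  | leaf l => rfl
  | node k t0 t1 ih0 ih1 =>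
    by_cases hkj : k = j
    · cases b <;> simp only [restrict, hkj, if_true, Bool.false_eq_true, if_false, depth] <;> omega
    · simp only [restrict, if_neg hkj, depth]
      omega

lemma length_follow_restrict_le (T : DTree n L) (j : Fin n) (b : Bool) (x : Fin n → Bool) :
    ((T.restrict j b).follow x).length ≤ (T.follow (update x j b)).length := by
  induction T with
  | leaf l => rfl
  | node k t0 t1 ih0 ih1 =>
    by_cases hkj : k = j
    · subst hkj
      cases b <;> simp only [restrict, if_true, Bool.false_eq_true, if_false, follow,
        update_self, List.length_cons] <;> omega
    · simp only [restrict, if_neg hkj, follow, update_of_ne hkj, List.length_cons]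
      split_ifs <;> omega

lemma depth_restrict_node_lt (j : Fin n) (t0 t1 : DTree n L) (b : Bool) :
    ((node j t0 t1).restrict j b).depth < (node j t0 t1).depth := by
  have h0 := depth_restrict_le t0 j b
  have h1 := depth_restrict_le t1 j b
  cases b <;> simp only [restrict, if_true, Bool.false_eq_true, if_false, depth] <;> omega

lemma length_follow_restrict_node_lt (j : Fin n) (t0 t1 : DTree n L) (b : Bool)
    (x : Fin n → Bool) :
    (((node j t0 t1).restrict j b).follow x).length <
      ((node j t0 t1).follow (update x j b)).length := by
  have h0 := length_follow_restrict_le t0 j b x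
  have h1 := length_follow_restrict_le t1 j b x
  cases b <;> simp only [restrict, if_true, Bool.false_eq_true, if_false, follow, update_self,
    List.length_cons] <;> omega

lemma follow_mem_leafAddrs (T : DTree n L) (x : Fin n → Bool) :
    T.follow x ∈ T.leafAddrs := by
  induction T with
  | leaf l => simp [follow, leafAddrs]
  | node i t0 t1 ih0 ih1 =>
    cases hx : x i <;> simp [follow, leafAddrs, hx, ih0, ih1]

end DTree

noncomputable def avgPathLength {n : ℕ} {L : Type} (p : Fin n → ℝ) (T : DTree n L) : ℝ :=
  prExpect p (fun x => ((T.follow x).length : ℝ))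

section Trees

variable {n : ℕ} {p : Fin n → ℝ}

lemma avgPathLength_nonneg (hp : ∀ i, 0 ≤ p i ∧ p i ≤ 1) {L : Type} (T : DTree n L) :
    0 ≤ avgPathLength p T :=
  prExpect_nonneg hp fun _ => Nat.cast_nonneg _

lemma avgPathLength_node_ge (hp : ∀ i, 0 ≤ p i ∧ p i ≤ 1) {L : Type} (j : Fin n)
    (t0 t1 : DTree n L) :
    1 + (p j * avgPathLength p ((DTree.node j t0 t1).restrict j true) +
      (1 - p j) * avgPathLength p ((DTree.node j t0 t1).restrict j false)) ≤
      avgPathLength p (DTree.node j t0 t1) := by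
  have hstep : ∀ b, avgPathLength p ((DTree.node j t0 t1).restrict j b) + 1 ≤
      prExpect p (fixCoord (fun x => (((DTree.node j t0 t1).follow x).length : ℝ)) j b) := by
    intro b
    rw [avgPathLength, ← prExpect_const 1, ← prExpect_add]
    refine prExpect_mono hp fun x => ?_
    have := DTree.length_follow_restrict_node_lt j t0 t1 b x
    simp only [fixCoord]
    exact_mod_cast this
  conv_rhs => rw [avgPathLength, prExpect_split j]
  nlinarith [hstep true, hstep false, (hp j).1, (hp j).2]

lemma avgPathLength_le_avgDepth (hp : ∀ i, 0 ≤ p i ∧ p i ≤ 1) {L : Type} (T : DTree n L) :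
    avgPathLength p T ≤ avgDepth p T := by
  have hswap : ∀ l : List (List Bool), (l.map fun s => reachLeaf p T s * (s.length : ℝ)).sum =
      prExpect p fun x =>
        (l.map fun s => if T.follow x = s then (s.length : ℝ) else 0).sum := by
    intro l
    induction l with
    | nil => simp [prExpect]
    | cons s l ih =>
      simp only [List.map_cons, List.sum_cons, ih, prExpect_add]
      simp [reachLeaf, prEvent, prExpect, sum_mul]
  rw [avgDepth, hswap]
  refine prExpect_mono hp fun x => ?_
  have hmem := List.mem_map_of_mem (f := fun s => if T.follow x = s then (s.length : ℝ) else 0)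
    (DTree.follow_mem_leafAddrs T x)
  simp only [if_true] at hmem
  exact List.single_le_sum (fun r hr => by
    obtain ⟨s, -, rfl⟩ := List.mem_map.1 hr
    positivity) _ hmem

theorem two_mul_totalInf_le_depth_mul_varOf (hp : ∀ i, 0 ≤ p i ∧ p i ≤ 1) :
    ∀ T : DTree n Bool, 2 * totalInf p T.eval ≤ T.depth * varOf p T.eval
  | .leaf c => by simp [totalInf, infl, DTree.eval, DTree.depth]
  | .node j t0 t1 => by
    set T := DTree.node j t0 t1
    have ih : ∀ b, 2 * totalInf p (fixCoord T.eval j b) ≤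
        ((T.depth : ℝ) - 1) * varOf p (fixCoord T.eval j b) := by
      intro b
      have hdepth : ((T.restrict j b).depth : ℝ) + 1 ≤ T.depth := by
        exact_mod_cast DTree.depth_restrict_node_lt j t0 t1 b
      rw [← DTree.eval_restrict]
      refine (two_mul_totalInf_le_depth_mul_varOf hp (T.restrict j b)).trans ?_
      exact mul_le_mul_of_nonneg_right (by linarith) (varOf_nonneg hp _)
    have hdepth_pos : (1 : ℝ) ≤ T.depth := by
      exact_mod_cast Nat.one_le_iff_ne_zero.2 (by simp [T, DTree.depth])
    calc 2 * totalInf p T.eval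
        = 2 * infl p j T.eval + (p j * (2 * totalInf p (fixCoord T.eval j true)) +
            (1 - p j) * (2 * totalInf p (fixCoord T.eval j false))) := by
          rw [totalInf_split j]; ring
      _ ≤ varOf p T.eval + ((T.depth : ℝ) - 1) * (p j * varOf p (fixCoord T.eval j true) +
            (1 - p j) * varOf p (fixCoord T.eval j false)) := by
          nlinarith [two_mul_infl_le_varOf hp j T.eval, ih true, ih false, (hp j).1, (hp j).2]
      _ ≤ varOf p T.eval + ((T.depth : ℝ) - 1) * varOf p T.eval := by
          have := mul_le_mul_of_nonneg_left (varOf_split_le hp j T.eval)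
            (by linarith : (0 : ℝ) ≤ T.depth - 1)
          linarith
      _ = T.depth * varOf p T.eval := by ring
termination_by T => T.depth
decreasing_by all_goals exact DTree.depth_restrict_node_lt j t0 t1 _

end Trees

section Main

variable {n : ℕ} {p : Fin n → ℝ}

lemma infl_le_maxInf (i : Fin n) (g : (Fin n → Bool) → Bool) : infl p i g ≤ maxInf p g :=
  le_ciSup (f := fun i => infl p i g) (Set.finite_range _).bddAbove i

lemma maxInf_nonneg (hp : ∀ i, 0 ≤ p i ∧ p i ≤ 1) (g : (Fin n → Bool) → Bool) :
    0 ≤ maxInf p g :=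
  Real.iSup_nonneg fun i => infl_nonneg hp i g

theorem cov_le_two_mul_maxInf_mul_avgPathLength (hp : ∀ i, 0 ≤ p i ∧ p i ≤ 1)
    (g : (Fin n → Bool) → Bool) :
    ∀ T : DTree n Bool, cov p g T.eval ≤ 2 * maxInf p g * avgPathLength p T
  | .leaf c => by
    rw [show (DTree.leaf c : DTree n Bool).eval = fun _ => c from rfl, cov_const]
    exact mul_nonneg (mul_nonneg zero_le_two (maxInf_nonneg hp g)) (avgPathLength_nonneg hp _)
  | .node j t0 t1 => by
    set T := DTree.node j t0 t1
    have ih : ∀ b, cov p g (fixCoord T.eval j b) ≤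
        2 * maxInf p g * avgPathLength p (T.restrict j b) := fun b => by
      rw [← DTree.eval_restrict]
      exact cov_le_two_mul_maxInf_mul_avgPathLength hp g (T.restrict j b)
    calc cov p g T.eval
        ≤ p j * cov p g (fixCoord T.eval j true) + (1 - p j) * cov p g (fixCoord T.eval j false) +
            2 * infl p j g := cov_le_split hp j g T.eval
      _ ≤ 2 * maxInf p g * (1 + (p j * avgPathLength p (T.restrict j true) +
            (1 - p j) * avgPathLength p (T.restrict j false))) := by
          nlinarith [ih true, ih false, infl_le_maxInf (p := p) j g, (hp j).1, (hp j).2]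
      _ ≤ 2 * maxInf p g * avgPathLength p T :=
          mul_le_mul_of_nonneg_left (avgPathLength_node_ge hp j t0 t1)
            (mul_nonneg zero_le_two (maxInf_nonneg hp g))
termination_by T => T.depth
decreasing_by all_goals exact DTree.depth_restrict_node_lt j t0 t1 _

theorem totalInf_le_mul_maxInf_of_computes (hp : ∀ i, 0 ≤ p i ∧ p i ≤ 1)
    (g : (Fin n → Bool) → Bool) (T : DTree n Bool) (hT : ∀ x, T.eval x = g x) {D Δ : ℝ}
    (hD : (T.depth : ℝ) ≤ D) (hΔ : avgDepth p T ≤ Δ) :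
    totalInf p g ≤ D * Δ * maxInf p g := by
  obtain rfl : T.eval = g := funext hT
  have hvar : varOf p T.eval ≤ 2 * maxInf p T.eval * Δ := by
    rw [← cov_self]
    exact (cov_le_two_mul_maxInf_mul_avgPathLength hp _ T).trans
      (mul_le_mul_of_nonneg_left ((avgPathLength_le_avgDepth hp T).trans hΔ)
        (mul_nonneg zero_le_two (maxInf_nonneg hp _)))
  have : 2 * totalInf p T.eval ≤ D * (2 * maxInf p T.eval * Δ) :=
    calc 2 * totalInf p T.eval ≤ T.depth * varOf p T.eval :=
          two_mul_totalInf_le_depth_mul_varOf hp T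
      _ ≤ D * (2 * maxInf p T.eval * Δ) :=
          mul_le_mul hD hvar (varOf_nonneg hp _) ((Nat.cast_nonneg _).trans hD)
  linarith

lemma reachLeaf_nonneg (hp : ∀ i, 0 ≤ p i ∧ p i ≤ 1) {L : Type} (T : DTree n L)
    (s : List Bool) : 0 ≤ reachLeaf p T s :=
  sum_nonneg fun x _ => by split_ifs <;> simp [prMass_nonneg hp x]

lemma score_nonneg (hp : ∀ i, 0 ≤ p i ∧ p i ≤ 1) (f : (Fin n → Bool) → Bool) {L : Type}
    (T : DTree n L) (s : List Bool) : 0 ≤ score p f T s :=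
  mul_nonneg (reachLeaf_nonneg hp T s) (maxInf_nonneg hp _)

theorem cost_le_length_mul_score (hp : ∀ i, 0 ≤ p i ∧ p i ≤ 1) (f : (Fin n → Bool) → Bool)
    {L : Type} (T : DTree n L) {C : ℝ} (hC : 0 ≤ C)
    (hleaf : ∀ s ∈ T.leafAddrs, totalInf p (subFun f T s) ≤ C * maxInf p (subFun f T s))
    {sstar : List Bool} (hmax : ∀ t ∈ T.leafAddrs, score p f T t ≤ score p f T sstar) :
    cost p f T ≤ T.leafAddrs.length * C * score p f T sstar :=
  calc cost p f T ≤ (T.leafAddrs.map fun s => C * score p f T s).sum :=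
        List.sum_le_sum fun s hs => by
          rw [score, mul_left_comm]
          exact mul_le_mul_of_nonneg_left (hleaf s hs) (reachLeaf_nonneg hp T s)
    _ ≤ (T.leafAddrs.map fun _ => C * score p f T sstar).sum :=
        List.sum_le_sum fun s hs => mul_le_mul_of_nonneg_left (hmax s hs) hC
    _ = T.leafAddrs.length * C * score p f T sstar := by
        rw [List.map_const', List.sum_replicate, nsmul_eq_mul, mul_assoc]

end Main

/-- **Score lower bound when the cost is high.** If every leaf subfunction
of the bare tree `T°` is computable by a decision tree of depth at most `D_opt` and average
depth at most `Δ_opt`, then the leaf of maximum score has score at least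
`cost(T°)/(j·D_opt·Δ_opt)`, where `j` is the number of leaves of `T°`. -/
theorem score_lower_bound_high_cost {n : ℕ} (p : Fin n → ℝ)
    (hp : ∀ i, 0 ≤ p i ∧ p i ≤ 1)
    (f : (Fin n → Bool) → Bool) (T : DTree n Unit) (Dopt Δopt : ℝ)
    (hleaf : ∀ s ∈ T.leafAddrs, ∃ Tl : DTree n Bool,
      (∀ x, Tl.eval x = subFun f T s x) ∧ (Tl.depth : ℝ) ≤ Dopt ∧ avgDepth p Tl ≤ Δopt)
    (sstar : List Bool) (hsstar : sstar ∈ T.leafAddrs)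
    (hmax : ∀ t ∈ T.leafAddrs, score p f T t ≤ score p f T sstar) :
    cost p f T / ((T.leafAddrs.length : ℝ) * Dopt * Δopt) ≤ score p f T sstar := by
  obtain ⟨Tstar, -, hDstar, hΔstar⟩ := hleaf sstar hsstar
  have hDopt : 0 ≤ Dopt := (Nat.cast_nonneg _).trans hDstar
  have hΔopt : 0 ≤ Δopt :=
    (avgPathLength_nonneg hp Tstar).trans ((avgPathLength_le_avgDepth hp Tstar).trans hΔstar)
  have hcost := cost_le_length_mul_score hp f T (mul_nonneg hDopt hΔopt) (fun s hs => by
    obtain ⟨Tl, heval, hD, hΔ⟩ := hleaf s hs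
    exact totalInf_le_mul_maxInf_of_computes hp _ Tl heval hD hΔ) hmax
  rw [← mul_assoc, mul_comm] at hcost
  exact div_le_of_le_mul₀ (by positivity) (score_nonneg hp f T sstar) hcost
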